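/- Let G be a finite simple graph with vertex set V, let p be a positive integer, and for each k ∈ {1,…,p} let W_k ⊆ V be a nonempty vertex subset whose induced subgraph in G is connected, and let g_i^k : ℝ^m → ℝ be a function for each i ∈ W_k. Define A := { u : V → ℝ^m : for all k, Σ_{i∈W_k} g_i^k(u(i)) ≤ 0 } and B := { (u, z) : for all k and all i ∈ W_k, g_i^k(u(i)) + Σ_{j∈N(i)∩W_k} (z(i,k) − z(j,k)) ≤ 0 }, where z assigns a real number z(i,k) to each pair (i,k) with i ∈ W_k. Then the projection of B onto the u-coordinates equals A. -/

import Mathlib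

/-!
Summing the decoupled constraints of block `k` over `W k` cancels the mismatch terms, since
they are the entries of `L z` for the Laplacian `L` of the induced graph on `W k`, and the
entries of `L z` sum to zero because `L` is symmetric and `L 1 = 0`. Conversely, on a
connected graph the kernel of `L` is one-dimensional, so by rank–nullity the range of `L` is
exactly the hyperplane of vectors with zero sum. Given `a` with `∑ a ≤ 0`, solving
`L z = e_{i₀} ∑ a - a` yields mismatch variables with `a i + (L z) i ≤ 0` for every `i`.
-/

open Finset Matrix

namespace SimpleGraph

variable {α : Type*} [Fintype α] [DecidableEq α] (H : SimpleGraph α) [DecidableRel H.Adj]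

theorem lapMatrix_mulVec_apply_eq_sum_sub {R : Type*} [NonAssocRing R] (i : α) (z : α → R) :
    (H.lapMatrix R *ᵥ z) i = ∑ j ∈ H.neighborFinset i, (z i - z j) := by
  rw [lapMatrix_mulVec_apply, sum_sub_distrib, sum_const, card_neighborFinset_eq_degree,
    nsmul_eq_mul]

theorem sum_lapMatrix_mulVec {R : Type*} [CommRing R] (z : α → R) :
    ∑ i, (H.lapMatrix R *ᵥ z) i = 0 := by
  have := dotProduct_mulVec (fun _ => (1 : R)) (H.lapMatrix R) z
  rw [← mulVec_transpose, (H.isSymm_lapMatrix R).eq, lapMatrix_mulVec_const_eq_zero,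
    zero_dotProduct] at this
  simpa [dotProduct] using this

theorem finrank_range_toLin'_lapMatrix (hH : H.Connected) :
    Module.finrank ℝ (LinearMap.range (H.lapMatrix ℝ).toLin') + 1 = Fintype.card α := by
  have hcard : Fintype.card H.ConnectedComponent = 1 :=
    Fintype.card_eq_one_iff.mpr ⟨H.connectedComponentMk hH.nonempty.some,
      fun c => c.ind fun v => ConnectedComponent.sound (hH.preconnected v _)⟩
  rw [← hcard, card_connectedComponent_eq_finrank_ker_toLin'_lapMatrix,
    LinearMap.finrank_range_add_finrank_ker, Module.finrank_fintype_fun_eq_card]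

theorem exists_lapMatrix_mulVec_eq (hH : H.Connected) {x : α → ℝ} (hx : ∑ i, x i = 0) :
    ∃ z, H.lapMatrix ℝ *ᵥ z = x := by
  let φ : Module.Dual ℝ (α → ℝ) := ∑ i, LinearMap.proj i
  have hφ : ∀ y, φ y = ∑ i, y i := fun y => by simp [φ]
  have hφ0 : φ ≠ 0 := fun h => by
    simpa [hφ] using LinearMap.congr_fun h (Pi.single hH.nonempty.some 1)
  have hle : LinearMap.range (H.lapMatrix ℝ).toLin' ≤ LinearMap.ker φ := by
    rintro _ ⟨z, rfl⟩
    simpa [hφ] using H.sum_lapMatrix_mulVec z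
  have hdim : Module.finrank ℝ (LinearMap.range (H.lapMatrix ℝ).toLin') =
      Module.finrank ℝ (LinearMap.ker φ) := by
    have hrange := H.finrank_range_toLin'_lapMatrix hH
    have hker := φ.finrank_ker_add_one_of_ne_zero hφ0
    rw [Module.finrank_fintype_fun_eq_card] at hker
    omega
  obtain ⟨z, hz⟩ : x ∈ LinearMap.range (H.lapMatrix ℝ).toLin' :=
    Submodule.eq_of_le_of_finrank_eq hle hdim ▸ (hφ x).trans hx
  exact ⟨z, hz⟩

theorem exists_add_lapMatrix_mulVec_nonpos (hH : H.Connected) {a : α → ℝ}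
    (ha : ∑ i, a i ≤ 0) : ∃ z, ∀ i, a i + (H.lapMatrix ℝ *ᵥ z) i ≤ 0 := by
  let i₀ := hH.nonempty.some
  obtain ⟨z, hz⟩ := H.exists_lapMatrix_mulVec_eq hH
    (x := Pi.single i₀ (∑ i, a i) - a) (by simp [sum_sub_distrib])
  refine ⟨z, fun i => ?_⟩
  rw [hz, Pi.sub_apply, add_sub_cancel]
  by_cases hi : i = i₀
  · simpa [hi] using ha
  · simp [hi]

theorem sum_neighborFinset_induce {M : Type*} [AddCommMonoid M] (s : Finset α)
    (i : (s : Set α)) (f : α → M) :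
    ∑ j ∈ (H.induce (s : Set α)).neighborFinset i, f j = ∑ j ∈ H.neighborFinset i ∩ s, f j := by
  have hmap := H.map_neighborFinset_induce i
  rw [toFinset_coe] at hmap
  rw [← hmap, sum_map]
  congr!

theorem sum_sum_neighborFinset_inter_sub {R : Type*} [CommRing R] (s : Finset α) (z : α → R) :
    ∑ i ∈ s, ∑ j ∈ H.neighborFinset i ∩ s, (z i - z j) = 0 := by
  rw [← sum_finset_coe, ← (H.induce (s : Set α)).sum_lapMatrix_mulVec (z ∘ (↑))]
  refine sum_congr rfl fun i _ => ?_
  rw [lapMatrix_mulVec_apply_eq_sum_sub, ← sum_neighborFinset_induce H s i (fun j => z i - z j)]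
  rfl

theorem exists_add_sum_neighborFinset_inter_sub_nonpos (s : Finset α)
    (hs : (H.induce (s : Set α)).Connected) {a : α → ℝ} (ha : ∑ i ∈ s, a i ≤ 0) :
    ∃ z : α → ℝ, ∀ i ∈ s, a i + ∑ j ∈ H.neighborFinset i ∩ s, (z i - z j) ≤ 0 := by
  obtain ⟨z, hz⟩ := (H.induce (s : Set α)).exists_add_lapMatrix_mulVec_nonpos hs
    (a := a ∘ (↑)) ((sum_finset_coe a s).trans_le ha)
  obtain ⟨Z, hZ⟩ : ∃ Z : α → ℝ, ∀ j : (s : Set α), Z j = z j :=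
    ⟨_, Subtype.val_injective.extend_apply z 0⟩
  refine ⟨Z, fun i hi => ?_⟩
  have hzi := hz ⟨i, hi⟩
  simp only [lapMatrix_mulVec_apply_eq_sum_sub, ← hZ, Function.comp_apply] at hzi
  rwa [sum_neighborFinset_induce H s _ (fun j => Z i - Z j)] at hzi

end SimpleGraph

theorem proj_decoupled_feasible_set_eq_coupled_general {V : Type*} [Fintype V]
    [DecidableEq V] (G : SimpleGraph V) [DecidableRel G.Adj] {m : ℕ}
    (p : ℕ) (W : Fin p → Finset V)
    (hWconn : ∀ k, (G.induce ((W k : Set V))).Connected)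
    (g : Fin p → V → (Fin m → ℝ) → ℝ)
    (A : Set (V → Fin m → ℝ))
    (hA : A = {u : V → Fin m → ℝ | ∀ k : Fin p, ∑ i ∈ W k, g k i (u i) ≤ 0})
    (B : Set ((V → Fin m → ℝ) × (V → Fin p → ℝ)))
    (hB : B = {uz : (V → Fin m → ℝ) × (V → Fin p → ℝ) |
      ∀ k : Fin p, ∀ i ∈ W k,
        g k i (uz.1 i) +
          ∑ j ∈ G.neighborFinset i ∩ W k, (uz.2 i k - uz.2 j k) ≤ 0}) :
    Prod.fst '' B = A := by
  subst hA hB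
  ext u
  constructor
  · rintro ⟨⟨u, z⟩, hz, rfl⟩ k
    have hsum := sum_nonpos (hz k)
    rwa [sum_add_distrib, G.sum_sum_neighborFinset_inter_sub (W k) (z · k), add_zero] at hsum
  · intro hu
    choose z hz using fun k =>
      G.exists_add_sum_neighborFinset_inter_sub_nonpos (W k) (hWconn k) (hu k)
    exact ⟨(u, fun i k => z k i), hz, rfl⟩

/-- Equivalence of feasible sets: the projection of the feasible set `B` of the
decoupled reformulation (with one constraint-mismatch variable `z i k` per
agent `i` and constraint `k` involving it) onto the `u`-coordinates equals the
feasible set `A` of the coupled network optimization problem. -/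
theorem proj_decoupled_feasible_set_eq_coupled {V : Type*} [Fintype V]
    [DecidableEq V] (G : SimpleGraph V) [DecidableRel G.Adj] {m : ℕ}
    (p : ℕ) (hp : 0 < p) (W : Fin p → Finset V)
    (hW : ∀ k, (W k).Nonempty)
    (hWconn : ∀ k, (G.induce ((W k : Set V))).Connected)
    (g : Fin p → V → (Fin m → ℝ) → ℝ)
    (A : Set (V → Fin m → ℝ))
    (hA : A = {u : V → Fin m → ℝ | ∀ k : Fin p, ∑ i ∈ W k, g k i (u i) ≤ 0})
    (B : Set ((V → Fin m → ℝ) × (V → Fin p → ℝ)))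
    (hB : B = {uz : (V → Fin m → ℝ) × (V → Fin p → ℝ) |
      ∀ k : Fin p, ∀ i ∈ W k,
        g k i (uz.1 i) +
          ∑ j ∈ G.neighborFinset i ∩ W k, (uz.2 i k - uz.2 j k) ≤ 0}) :
    Prod.fst '' B = A :=
  proj_decoupled_feasible_set_eq_coupled_general G p W hWconn g A hA B hB
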